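/- Let λ > 1, γ_λ = Γ(1/2)Γ(λ/2)/(2Γ((λ+1)/2)), and ε ∈ (0, 1). Then for every s ∈ (0, 1 − ε], γ_λ π s^{λ−1} / (∫_s^1 y^{λ−1}/√(y² − s²) dy) ≤ γ_λ π (λ − 1)(1 − ε)^{λ−1} / (1 − (1 − ε)^{λ−1}). Equivalently, the ratio of the external field derivative to the equilibrium density, Q'(x)/σ_{n+1}(x) with Q(x) = c|x|^λ, is bounded on (0, a_{n+1}(1 − ε)] by the constant C = γ_λ π (λ − 1)(1 − ε)^{λ−1} / (1 − (1 − ε)^{λ−1}), uniformly in n. -/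

import Mathlib

open MeasureTheory

/-- For `λ > 1`, `γ_λ = Γ(1/2)Γ(λ/2)/(2Γ((λ+1)/2))` and
`ε ∈ (0,1)`, the ratio `γ_λ π s^{λ-1} / ∫_s^1 y^{λ-1}/√(y²-s²) dy` (which equals
`Q'(x)/σ_{n+1}(x)` at `x = a_{n+1} s`) is bounded for all `s ∈ (0, 1-ε]` by
`γ_λ π (λ-1)(1-ε)^{λ-1} / (1 - (1-ε)^{λ-1})`, uniformly in `n`. -/
theorem field_to_density_ratio_bound
    (lam : ℝ) (hlam : 1 < lam)
    (γlam : ℝ)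
    (hγ : γlam = Real.Gamma (1 / 2) * Real.Gamma (lam / 2)
      / (2 * Real.Gamma ((lam + 1) / 2)))
    (ε : ℝ) (hε : ε ∈ Set.Ioo (0 : ℝ) 1)
    (s : ℝ) (hs : s ∈ Set.Ioc (0 : ℝ) (1 - ε)) :
    γlam * Real.pi * s ^ (lam - 1)
        / (∫ y in Set.Ioo s 1, y ^ (lam - 1) / Real.sqrt (y ^ 2 - s ^ 2))
      ≤ γlam * Real.pi * (lam - 1) * (1 - ε) ^ (lam - 1)
        / (1 - (1 - ε) ^ (lam - 1)) := by
  obtain ⟨hε0, hε1⟩ := hε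
  obtain ⟨hs0, hs1⟩ := hs
  have hs1' : s < 1 := by linarith
  have hL : 0 < lam - 1 := by linarith
  have hγpos : 0 < γlam := by
    rw [hγ]
    have h1 := Real.Gamma_pos_of_pos (show (0:ℝ) < 1/2 by norm_num)
    have h2 := Real.Gamma_pos_of_pos (show (0:ℝ) < lam/2 by linarith)
    have h3 := Real.Gamma_pos_of_pos (show (0:ℝ) < (lam+1)/2 by linarith)
    positivity
  have hγπ : 0 < γlam * Real.pi := mul_pos hγpos Real.pi_pos
  have hsL : s ^ (lam - 1) ≤ (1 - ε) ^ (lam - 1) :=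
    Real.rpow_le_rpow hs0.le hs1 hL.le
  have hεL1 : (1 - ε) ^ (lam - 1) < 1 :=
    Real.rpow_lt_one (by linarith) (by linarith) (by linarith)
  have hsL1 : s ^ (lam - 1) < 1 := lt_of_le_of_lt hsL hεL1
  -- integrability of the integrand
  have hf : IntegrableOn (fun y => y ^ (lam - 1) / Real.sqrt (y ^ 2 - s ^ 2))
      (Set.Ioo s 1) := by
    have h0 : IntervalIntegrable (fun x : ℝ => x ^ (-(1/2) : ℝ)) volume 0 (1 - s) :=
      intervalIntegral.intervalIntegrable_rpow' (by norm_num)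
    have h1 : IntervalIntegrable (fun y : ℝ => (y - s) ^ (-(1/2) : ℝ)) volume s 1 := by
      have := h0.comp_sub_right s
      simpa using this
    have hg : IntegrableOn (fun y : ℝ => s ^ (-(1/2) : ℝ) * (y - s) ^ (-(1/2) : ℝ))
        (Set.Ioo s 1) :=
      ((h1.1).mono_set Set.Ioo_subset_Ioc_self).const_mul _
    apply Integrable.mono' hg
    · apply Measurable.aestronglyMeasurable
      fun_prop
    · filter_upwards [ae_restrict_mem measurableSet_Ioo] with y hy
      obtain ⟨hys, hy1⟩ := hy
      have hy0 : 0 < y := lt_trans hs0 hys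
      have hpos : 0 < y ^ 2 - s ^ 2 := by nlinarith
      have hnum : y ^ (lam - 1) ≤ 1 :=
        Real.rpow_le_one hy0.le hy1.le hL.le
      have hsqrt : Real.sqrt s * Real.sqrt (y - s) ≤ Real.sqrt (y ^ 2 - s ^ 2) := by
        rw [← Real.sqrt_mul hs0.le]
        apply Real.sqrt_le_sqrt
        nlinarith
      have hsq0 : 0 < Real.sqrt s * Real.sqrt (y - s) := by
        apply mul_pos (Real.sqrt_pos.mpr hs0) (Real.sqrt_pos.mpr (by linarith))
      rw [Real.norm_eq_abs, abs_of_nonneg (by positivity)]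
      calc y ^ (lam - 1) / Real.sqrt (y ^ 2 - s ^ 2)
          ≤ 1 / (Real.sqrt s * Real.sqrt (y - s)) := by
            apply div_le_div₀ (by norm_num) hnum hsq0 hsqrt
        _ = s ^ (-(1/2) : ℝ) * (y - s) ^ (-(1/2) : ℝ) := by
            rw [Real.rpow_neg hs0.le, Real.rpow_neg (by linarith : (0:ℝ) ≤ y - s),
              ← Real.sqrt_eq_rpow, ← Real.sqrt_eq_rpow, one_div, mul_inv]
  -- lower bound on the integral
  have hIlow : (1 - s ^ (lam - 1)) / (lam - 1)
      ≤ ∫ y in Set.Ioo s 1, y ^ (lam - 1) / Real.sqrt (y ^ 2 - s ^ 2) := by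
    have hcalc : (∫ y in Set.Ioo s 1, y ^ (lam - 2)) = (1 - s ^ (lam - 1)) / (lam - 1) := by
      rw [← MeasureTheory.integral_Ioc_eq_integral_Ioo,
        ← intervalIntegral.integral_of_le hs1'.le,
        integral_rpow (Or.inl (by linarith))]
      have h21 : lam - 2 + 1 = lam - 1 := by ring
      rw [h21, Real.one_rpow]
    rw [← hcalc]
    have hg2 : IntegrableOn (fun y : ℝ => y ^ (lam - 2)) (Set.Ioo s 1) :=
      (intervalIntegral.intervalIntegrable_rpow' (r := lam - 2) (a := s) (b := 1)
        (by linarith)).1.mono_set Set.Ioo_subset_Ioc_self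
    apply setIntegral_mono_on hg2 hf measurableSet_Ioo
    intro y hy
    obtain ⟨hys, hy1⟩ := hy
    have hy0 : 0 < y := lt_trans hs0 hys
    have hpos : 0 < y ^ 2 - s ^ 2 := by nlinarith
    have h1 : Real.sqrt (y ^ 2 - s ^ 2) ≤ y := by
      calc Real.sqrt (y ^ 2 - s ^ 2) ≤ Real.sqrt (y ^ 2) :=
            Real.sqrt_le_sqrt (by nlinarith)
        _ = y := Real.sqrt_sq hy0.le
    have h2 : y ^ (lam - 2) = y ^ (lam - 1) / y := by
      rw [show lam - 2 = lam - 1 - 1 by ring, Real.rpow_sub hy0, Real.rpow_one]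
    rw [h2]
    apply div_le_div₀ (Real.rpow_nonneg hy0.le _) le_rfl (Real.sqrt_pos.mpr hpos) h1
  have hbpos : 0 < (1 - s ^ (lam - 1)) / (lam - 1) := div_pos (by linarith) hL
  have hnum0 : 0 ≤ γlam * Real.pi * s ^ (lam - 1) := by positivity
  calc γlam * Real.pi * s ^ (lam - 1)
        / (∫ y in Set.Ioo s 1, y ^ (lam - 1) / Real.sqrt (y ^ 2 - s ^ 2))
      ≤ γlam * Real.pi * s ^ (lam - 1) / ((1 - s ^ (lam - 1)) / (lam - 1)) := by
        gcongr
    _ = γlam * Real.pi * (lam - 1) * s ^ (lam - 1) / (1 - s ^ (lam - 1)) := by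
        field_simp
    _ ≤ γlam * Real.pi * (lam - 1) * (1 - ε) ^ (lam - 1)
        / (1 - (1 - ε) ^ (lam - 1)) := by
        apply div_le_div₀ (mul_nonneg (by positivity) (Real.rpow_nonneg (by linarith) _))
          (by gcongr) (by linarith) (by linarith)
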